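/- arXiv:0803.3122 — 2 statements merged into one kernel-verified Lean document; each statement's English description precedes it below -/
import Mathlib

section
/- Let X and Y be metric measure spaces with Borel probability measures, and let H be a real Hilbert space. For any measurable map f : X × Y → H with V_2(f) < ∞, one has V_2(f)² ≤ ∫_X V_2(f^x)² dμ_X(x) + ∫_Y V_2(f^y)² dμ_Y(y), where V_2(g)² = ∬ ‖g(w)−g(w')‖² d(μ⊗μ)(w,w'), f^x(y) = f(x,y), and f^y(x) = f(x,y). -/
/-!
Put `a = (x, y)`, `b = (x', y)`, `c = (x', y')`, `d = (x, y')` for independent `x, x' ∼ μ_X` and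
`y, y' ∼ μ_Y`. The parallelogram law gives
`‖f a - f c‖² + ‖f b - f d‖² ≤ ‖f a - f b‖² + ‖f b - f c‖² + ‖f c - f d‖² + ‖f a - f d‖²`.
Taking expectations, both diagonals contribute `V₂(f)²`, the horizontal sides `∫ V₂(f^y)² dμ_Y`
and the vertical sides `∫ V₂(f^x)² dμ_X`, since exchanging `x ↔ x'` (or both pairs of coordinates)
preserves the product measure. All terms are integrable because `f - f w₀ ∈ L²` for a.e. `w₀`.
-/

open MeasureTheory

theorem norm_sub_sq_add_norm_sub_sq_le {H : Type*} [NormedAddCommGroup H] [InnerProductSpace ℝ H]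
    (a b c d : H) :
    ‖a - c‖ ^ 2 + ‖b - d‖ ^ 2 ≤ ‖a - b‖ ^ 2 + ‖b - c‖ ^ 2 + ‖c - d‖ ^ 2 + ‖a - d‖ ^ 2 := by
  -- the defect is `‖a - b + c - d‖²`
  have h := sq_nonneg ‖a - b + (c - d)‖
  simp only [norm_add_sq_real, norm_sub_sq_real, inner_sub_left, inner_sub_right] at h ⊢
  linarith

theorem norm_sub_sq_le_two_mul {E : Type*} [SeminormedAddCommGroup E] (u v w : E) :
    ‖u - v‖ ^ 2 ≤ 2 * (‖u - w‖ ^ 2 + ‖v - w‖ ^ 2) := by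
  have h : ‖u - v‖ ≤ ‖u - w‖ + ‖v - w‖ := by
    simpa only [norm_sub_rev w v] using norm_sub_le_norm_sub_add_norm_sub u w v
  exact (pow_le_pow_left₀ (norm_nonneg _) h 2).trans add_sq_le

namespace MeasureTheory

variable {α β γ δ : Type*} [MeasurableSpace α] [MeasurableSpace β] [MeasurableSpace γ]
  [MeasurableSpace δ]

theorem MeasurePreserving.integral_comp_of_aestronglyMeasurable {E : Type*}
    [NormedAddCommGroup E] [NormedSpace ℝ E] {μ : Measure α} {ν : Measure β} {φ : α → β}
    (hφ : MeasurePreserving φ μ ν) {g : β → E} (hg : AEStronglyMeasurable g ν) :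
    ∫ a, g (φ a) ∂μ = ∫ b, g b ∂ν := by
  rw [← hφ.map_eq] at hg ⊢
  exact (integral_map hφ.aemeasurable hg).symm

theorem measurePreserving_prodProdProdComm (μa : Measure α) (μb : Measure β) (μc : Measure γ)
    (μd : Measure δ) [SFinite μa] [SFinite μb] [SFinite μc] [SFinite μd] :
    MeasurePreserving (Equiv.prodProdProdComm α β γ δ) ((μa.prod μb).prod (μc.prod μd))
      ((μa.prod μc).prod (μb.prod μd)) :=
  (measurePreserving_prodAssoc μa μc (μb.prod μd)).symm _ |>.comp <|
    ((MeasurePreserving.id μa).prod (measurePreserving_prodAssoc μc μb μd)).comp <|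
    ((MeasurePreserving.id μa).prod
      (Measure.measurePreserving_swap.prod (MeasurePreserving.id μd))).comp <|
    ((MeasurePreserving.id μa).prod ((measurePreserving_prodAssoc μb μc μd).symm _)).comp <|
    measurePreserving_prodAssoc μa μb (μc.prod μd)

theorem integral_prod_prod_eq_integral_integral_integral {E : Type*} [NormedAddCommGroup E]
    [NormedSpace ℝ E] {μ : Measure α} {ν : Measure β} [SFinite μ] [SFinite ν]
    {G : α → β → β → E}
    (hG : Integrable (fun z : α × β × β => G z.1 z.2.1 z.2.2) (μ.prod (ν.prod ν))) :
    ∫ z, G z.1 z.2.1 z.2.2 ∂(μ.prod (ν.prod ν)) = ∫ a, ∫ b, ∫ b', G a b b' ∂ν ∂ν ∂μ := by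
  rw [integral_prod _ hG]
  refine integral_congr_ae ?_
  filter_upwards [hG.prod_right_ae] with a ha
  exact integral_prod _ ha

theorem integrable_norm_comp_sub_comp_sq {E : Type*} [NormedAddCommGroup E] {μ : Measure α}
    {ν : Measure β} [IsProbabilityMeasure ν] {f : β → E} (hf : AEStronglyMeasurable f ν)
    (hint : Integrable (fun q : β × β => ‖f q.1 - f q.2‖ ^ 2) (ν.prod ν)) {p q : α → β}
    (hp : MeasurePreserving p μ ν) (hq : MeasurePreserving q μ ν) :
    Integrable (fun a => ‖f (p a) - f (q a)‖ ^ 2) μ := by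
  obtain ⟨w₀, hw₀⟩ := hint.prod_left_ae.exists
  refine Integrable.mono' (((hp.integrable_comp_of_integrable hw₀).add
    (hq.integrable_comp_of_integrable hw₀)).const_mul 2)
    (((hf.comp_measurePreserving hp).sub (hf.comp_measurePreserving hq)).norm.pow 2)
    (ae_of_all _ fun a => ?_)
  rw [Real.norm_of_nonneg (by positivity)]
  exact norm_sub_sq_le_two_mul _ _ (f w₀)

theorem integral_norm_sub_sq_add_norm_sub_sq_le {H : Type*} [NormedAddCommGroup H]
    [InnerProductSpace ℝ H] {μ : Measure α} {ν : Measure β} [IsProbabilityMeasure ν] {f : β → H}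
    (hf : AEStronglyMeasurable f ν)
    (hint : Integrable (fun q : β × β => ‖f q.1 - f q.2‖ ^ 2) (ν.prod ν)) {a b c d : α → β}
    (ha : MeasurePreserving a μ ν) (hb : MeasurePreserving b μ ν) (hc : MeasurePreserving c μ ν)
    (hd : MeasurePreserving d μ ν) :
    (∫ z, ‖f (a z) - f (c z)‖ ^ 2 ∂μ) + ∫ z, ‖f (b z) - f (d z)‖ ^ 2 ∂μ ≤
      (∫ z, ‖f (a z) - f (b z)‖ ^ 2 ∂μ) + (∫ z, ‖f (b z) - f (c z)‖ ^ 2 ∂μ) +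
        (∫ z, ‖f (c z) - f (d z)‖ ^ 2 ∂μ) + ∫ z, ‖f (a z) - f (d z)‖ ^ 2 ∂μ := by
  have int : ∀ {p q : α → β}, MeasurePreserving p μ ν → MeasurePreserving q μ ν →
      Integrable (fun z => ‖f (p z) - f (q z)‖ ^ 2) μ :=
    fun hp hq => integrable_norm_comp_sub_comp_sq hf hint hp hq
  rw [← integral_add (int ha hc) (int hb hd), ← integral_add (int ha hb) (int hb hc),
    ← integral_add ((int ha hb).fun_add (int hb hc)) (int hc hd),
    ← integral_add (((int ha hb).fun_add (int hb hc)).fun_add (int hc hd)) (int ha hd)]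
  exact integral_mono ((int ha hc).fun_add (int hb hd))
    ((((int ha hb).fun_add (int hb hc)).fun_add (int hc hd)).fun_add (int ha hd)) fun z =>
    norm_sub_sq_add_norm_sub_sq_le _ _ _ _

end MeasureTheory

section ProductVariation

variable {X Y H : Type*} [MeasurableSpace X] [MeasurableSpace Y] [NormedAddCommGroup H]
  (μX : Measure X) (μY : Measure Y) [IsProbabilityMeasure μX] [IsProbabilityMeasure μY]
  {f : X × Y → H}

theorem integral_norm_sub_sq_vertical (hf : AEStronglyMeasurable f (μX.prod μY))
    (hint : Integrable (fun q : (X × Y) × (X × Y) => ‖f q.1 - f q.2‖ ^ 2)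
      ((μX.prod μY).prod (μX.prod μY))) :
    ∫ z, ‖f (z.1.1, z.2.1) - f (z.1.1, z.2.2)‖ ^ 2 ∂((μX.prod μX).prod (μY.prod μY)) =
      ∫ x, ∫ y, ∫ y', ‖f (x, y) - f (x, y')‖ ^ 2 ∂μY ∂μY ∂μX := by
  have hG : Integrable (fun z : X × Y × Y => ‖f (z.1, z.2.1) - f (z.1, z.2.2)‖ ^ 2)
      (μX.prod (μY.prod μY)) :=
    integrable_norm_comp_sub_comp_sq hf hint ((MeasurePreserving.id μX).prod measurePreserving_fst)
      ((MeasurePreserving.id μX).prod measurePreserving_snd)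
  have hproj : MeasurePreserving (Prod.map Prod.fst id) ((μX.prod μX).prod (μY.prod μY))
      (μX.prod (μY.prod μY)) :=
    measurePreserving_fst.prod (MeasurePreserving.id _)
  exact (hproj.integral_comp_of_aestronglyMeasurable hG.aestronglyMeasurable).trans
    (integral_prod_prod_eq_integral_integral_integral
      (G := fun x y y' => ‖f (x, y) - f (x, y')‖ ^ 2) hG)

theorem integral_norm_sub_sq_horizontal (hf : AEStronglyMeasurable f (μX.prod μY))
    (hint : Integrable (fun q : (X × Y) × (X × Y) => ‖f q.1 - f q.2‖ ^ 2)
      ((μX.prod μY).prod (μX.prod μY))) :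
    ∫ z, ‖f (z.1.1, z.2.1) - f (z.1.2, z.2.1)‖ ^ 2 ∂((μX.prod μX).prod (μY.prod μY)) =
      ∫ y, ∫ x, ∫ x', ‖f (x, y) - f (x', y)‖ ^ 2 ∂μX ∂μX ∂μY := by
  have hswap := Measure.measurePreserving_swap (μ := μY) (ν := μX)
  rw [← integral_prod_swap]
  exact integral_norm_sub_sq_vertical μY μX (f := f ∘ Prod.swap)
    (hf.comp_measurePreserving hswap) ((hswap.prod hswap).integrable_comp_of_integrable hint)

theorem integral_norm_sub_sq_diagonal_le [InnerProductSpace ℝ H]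
    (hf : AEStronglyMeasurable f (μX.prod μY))
    (hint : Integrable (fun q : (X × Y) × (X × Y) => ‖f q.1 - f q.2‖ ^ 2)
      ((μX.prod μY).prod (μX.prod μY))) :
    ∫ z, ‖f (z.1.1, z.2.1) - f (z.1.2, z.2.2)‖ ^ 2 ∂((μX.prod μX).prod (μY.prod μY)) ≤
      (∫ z, ‖f (z.1.1, z.2.1) - f (z.1.2, z.2.1)‖ ^ 2 ∂((μX.prod μX).prod (μY.prod μY))) +
      ∫ z, ‖f (z.1.1, z.2.1) - f (z.1.1, z.2.2)‖ ^ 2 ∂((μX.prod μX).prod (μY.prod μY)) := by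
  set ρ := (μX.prod μX).prod (μY.prod μY)
  have ha : MeasurePreserving (fun z : (X × X) × (Y × Y) => (z.1.1, z.2.1)) ρ (μX.prod μY) :=
    measurePreserving_fst.prod measurePreserving_fst
  have hb : MeasurePreserving (fun z : (X × X) × (Y × Y) => (z.1.2, z.2.1)) ρ (μX.prod μY) :=
    measurePreserving_snd.prod measurePreserving_fst
  have hc : MeasurePreserving (fun z : (X × X) × (Y × Y) => (z.1.2, z.2.2)) ρ (μX.prod μY) :=
    measurePreserving_snd.prod measurePreserving_snd
  have hd : MeasurePreserving (fun z : (X × X) × (Y × Y) => (z.1.1, z.2.2)) ρ (μX.prod μY) :=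
    measurePreserving_fst.prod measurePreserving_snd
  have hswapX : MeasurePreserving (Prod.map Prod.swap id) ρ ρ :=
    Measure.measurePreserving_swap.prod (MeasurePreserving.id _)
  have hswapXY : MeasurePreserving (Prod.map Prod.swap Prod.swap) ρ ρ :=
    Measure.measurePreserving_swap.prod Measure.measurePreserving_swap
  have int : ∀ {p q : (X × X) × (Y × Y) → X × Y}, MeasurePreserving p ρ (μX.prod μY) →
      MeasurePreserving q ρ (μX.prod μY) → Integrable (fun z => ‖f (p z) - f (q z)‖ ^ 2) ρ :=
    fun hp hq => integrable_norm_comp_sub_comp_sq hf hint hp hq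
  -- `x ↔ x'` maps the diagonal `ac` to `bd` and the side `ad` to `bc`;
  -- `(x, y) ↔ (x', y')` maps the side `ab` to `cd`
  have hbd := hswapX.integral_comp_of_aestronglyMeasurable (int ha hc).aestronglyMeasurable
  have hbc := hswapX.integral_comp_of_aestronglyMeasurable (int ha hd).aestronglyMeasurable
  have hcd := hswapXY.integral_comp_of_aestronglyMeasurable (int ha hb).aestronglyMeasurable
  have quad := integral_norm_sub_sq_add_norm_sub_sq_le hf hint ha hb hc hd
  simp only [Prod.map_fst, Prod.map_snd, Prod.fst_swap, Prod.snd_swap, id] at hbd hbc hcd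
  linarith

end ProductVariation

/-- Sharper product inequality for the `L²`-variation of maps into a Hilbert space:
`V₂(f)² ≤ ∫_X V₂(f^x)² dμ_X + ∫_Y V₂(f^y)² dμ_Y`. -/
theorem obsL2Var_product_inequality_hilbert
    {X Y H : Type*} [MeasurableSpace X] [MeasurableSpace Y]
    [NormedAddCommGroup H] [InnerProductSpace ℝ H]
    (μX : Measure X) (μY : Measure Y)
    [IsProbabilityMeasure μX] [IsProbabilityMeasure μY]
    (f : X × Y → H)
    (hmeas : AEStronglyMeasurable f (μX.prod μY))
    (hint : Integrable (fun q : (X × Y) × (X × Y) => ‖f q.1 - f q.2‖ ^ 2)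
      ((μX.prod μY).prod (μX.prod μY))) :
    ∫ w, ∫ w', ‖f w - f w'‖ ^ 2 ∂(μX.prod μY) ∂(μX.prod μY) ≤
      (∫ x, ∫ y, ∫ y', ‖f (x, y) - f (x, y')‖ ^ 2 ∂μY ∂μY ∂μX) +
      ∫ y, ∫ x, ∫ x', ‖f (x, y) - f (x', y)‖ ^ 2 ∂μX ∂μX ∂μY := by
  have hdiag : ∫ w, ∫ w', ‖f w - f w'‖ ^ 2 ∂(μX.prod μY) ∂(μX.prod μY) =
      ∫ z, ‖f (z.1.1, z.2.1) - f (z.1.2, z.2.2)‖ ^ 2 ∂((μX.prod μX).prod (μY.prod μY)) := by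
    rw [integral_integral (f := fun w w' => ‖f w - f w'‖ ^ 2) hint]
    exact ((measurePreserving_prodProdProdComm μX μX μY μY).integral_comp_of_aestronglyMeasurable
      hint.aestronglyMeasurable).symm
  rw [hdiag, ← integral_norm_sub_sq_vertical μX μY hmeas hint,
    ← integral_norm_sub_sq_horizontal μX μY hmeas hint, add_comm]
  exact integral_norm_sub_sq_diagonal_le μX μY hmeas hint
end

section
/- Let T be the tripod (three rays glued at a common origin) and let {a,b} carry the uniform probability measure. Define f : {a,b}² → T by f(a,a) = (1,1) ∈ T₁, f(b,a) = (2,1) ∈ T₂, f(a,b) = f(b,b) = (3,1) ∈ T₃. Then E(f) = (0,0) (the gluing point), E(f^a) = (0,0), E(f^b) = (3,1), and E_y(E(f^y)) = (3,1/2); in particular d_T(E(f), E_y(E(f^y))) = 1/2 > 0, so the Fubini identity E(f) = E_y(E(f^y)) fails for maps into nonlinear CAT(0) spaces. -/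
/-- The tripod: three copies of `[0,∞)` glued at their origins, with canonical
representatives (the gluing point is `(0, 0)`). -/
def Tripod : Type :=
  {p : Fin 3 × ℝ // 0 ≤ p.2 ∧ (p.2 = 0 → p.1 = 0)}

/-- The intrinsic distance on the tripod: `|r − s|` within one ray, `r + s` across rays. -/
noncomputable def tdist (p q : Tripod) : ℝ :=
  if p.1.1 = q.1.1 then |p.1.2 - q.1.2| else p.1.2 + q.1.2

/-- The gluing point of the tripod. -/
def tripodOrigin : Tripod := ⟨(0, 0), le_refl 0, fun _ => rfl⟩

/-- The point `(i, 1)` on the `i`-th ray of the tripod. -/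
def tripodPt (i : Fin 3) : Tripod := ⟨(i, 1), by norm_num⟩

/-- The point `(3, 1/2)` on the third ray of the tripod. -/
noncomputable def tripodHalf : Tripod := ⟨(2, 1 / 2), by norm_num⟩

/-- The counterexample map `f : {a,b}² → T` with `f(a,a) = (1,1)`, `f(b,a) = (2,1)`,
`f(a,b) = f(b,b) = (3,1)` (here `a = false`, `b = true`, the first ray has index `0`). -/
noncomputable def cex (w : Bool × Bool) : Tripod :=
  if w.2 then tripodPt 2 else if w.1 then tripodPt 1 else tripodPt 0

/-!
On the tripod, a point `x` with radius `r` on ray `i` and a point `y` with radius `s` on ray `j`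
satisfy `d(x,y)² = r² + s² − 2εrs` with `ε = ±1` according as `i = j` or not. Hence every
weighted sum of squared distances to points of radius `1` (and to the origin) has the form
`r² − 2 m(i) r + c`, where `m(i)` is the weight on ray `i` minus the weight on the other rays.
Its unique minimizer is the origin when every `m(i) ≤ 0`, and the point of radius `m(k)` on
ray `k` when only `m(k)` is positive. For `f` the ray masses are `(−1/2, −1/2, 0)`, so `E(f)`
is the origin; for the slices they are `(0, 0, −1)` and `(−1, −1, 1)`; and for the repeated
expectation, whose points are the origin and `(3,1)`, they are `(−1/2, −1/2, 1/2)`.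
-/

def IsUniqueMinimizer {α β : Type*} [Preorder β] (F : α → β) (x₀ : α) : Prop :=
  ∀ x, (∀ y, F x ≤ F y) ↔ x = x₀

theorem IsUniqueMinimizer.of_lt {α β : Type*} [Preorder β] {F : α → β} {x₀ : α}
    (h : ∀ y, y ≠ x₀ → F x₀ < F y) : IsUniqueMinimizer F x₀ := by
  intro x
  constructor
  · intro hx
    by_contra hne
    exact lt_irrefl _ ((h x hne).trans_le (hx x₀))
  · rintro rfl y
    rcases eq_or_ne y x with rfl | hne
    · exact le_rfl
    · exact (h y hne).le

namespace Tripod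

theorem ext {x y : Tripod} (h₁ : x.1.1 = y.1.1) (h₂ : x.1.2 = y.1.2) : x = y :=
  Subtype.ext (Prod.ext h₁ h₂)

theorem eq_origin_iff (x : Tripod) : x = tripodOrigin ↔ x.1.2 = 0 :=
  ⟨fun h => h ▸ rfl, fun h => ext (x.2.2 h) h⟩

/-- `1` on the same ray, `-1` across rays: the cosine of the angle between two rays. -/
def raySign (i j : Fin 3) : ℝ := if i = j then 1 else -1

theorem tdist_sq (x y : Tripod) :
    tdist x y ^ 2 = x.1.2 ^ 2 + y.1.2 ^ 2 - 2 * raySign x.1.1 y.1.1 * x.1.2 * y.1.2 := by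
  unfold tdist raySign
  split_ifs
  · rw [sq_abs]
    ring
  · ring

theorem tdist_tripodPt_sq (x : Tripod) (j : Fin 3) :
    tdist x (tripodPt j) ^ 2 = x.1.2 ^ 2 - 2 * raySign x.1.1 j * x.1.2 + 1 := by
  rw [tdist_sq]
  change x.1.2 ^ 2 + 1 ^ 2 - 2 * raySign x.1.1 j * x.1.2 * 1 = _
  ring

theorem tdist_comm (x y : Tripod) : tdist x y = tdist y x := by
  unfold tdist
  by_cases h : x.1.1 = y.1.1
  · rw [if_pos h, if_pos h.symm, abs_sub_comm]
  · rw [if_neg h, if_neg (Ne.symm h), add_comm]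

theorem tdist_origin (x : Tripod) : tdist x tripodOrigin = x.1.2 := by
  unfold tdist tripodOrigin
  split_ifs
  · simp [abs_of_nonneg x.2.1]
  · simp

section Barycenter

variable {F : Tripod → ℝ} {m : Fin 3 → ℝ} {c : ℝ}

theorem isUniqueMinimizer_origin_of_nonpos
    (hF : ∀ x : Tripod, F x = x.1.2 ^ 2 - 2 * m x.1.1 * x.1.2 + c) (hm : ∀ i, m i ≤ 0) :
    IsUniqueMinimizer F tripodOrigin := by
  refine IsUniqueMinimizer.of_lt fun y hy => ?_
  have hr : 0 < y.1.2 := lt_of_le_of_ne y.2.1 (Ne.symm (mt (eq_origin_iff y).2 hy))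
  have hmy : 0 ≤ -m y.1.1 * y.1.2 := mul_nonneg (neg_nonneg.2 (hm _)) hr.le
  rw [hF, hF]
  simp only [tripodOrigin]
  nlinarith

theorem isUniqueMinimizer_of_pos (hF : ∀ x : Tripod, F x = x.1.2 ^ 2 - 2 * m x.1.1 * x.1.2 + c)
    {x₀ : Tripod} (hpos : 0 < x₀.1.2) (hm₀ : m x₀.1.1 = x₀.1.2)
    (hm : ∀ i, i ≠ x₀.1.1 → m i ≤ 0) : IsUniqueMinimizer F x₀ := by
  refine IsUniqueMinimizer.of_lt fun y hy => ?_
  rw [hF, hF, hm₀]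
  by_cases hray : y.1.1 = x₀.1.1
  · have hr : y.1.2 ≠ x₀.1.2 := fun hr => hy (ext hray hr)
    have hsq : 0 < (y.1.2 - x₀.1.2) ^ 2 := sq_pos_of_ne_zero (sub_ne_zero.2 hr)
    rw [hray, hm₀]
    nlinarith
  · have hmy : 0 ≤ -m y.1.1 * y.1.2 := mul_nonneg (neg_nonneg.2 (hm _ hray)) y.2.1
    nlinarith

end Barycenter

end Tripod

open Tripod

theorem isUniqueMinimizer_expectation_cex :
    IsUniqueMinimizer (fun x => ∑ w : Bool × Bool, (1 / 4 : ℝ) * tdist x (cex w) ^ 2)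
      tripodOrigin := by
  refine isUniqueMinimizer_origin_of_nonpos
    (m := fun i => (raySign i 0 + raySign i 1 + 2 * raySign i 2) / 4) (c := 1)
    (fun x => ?_) (fun i => ?_)
  · simp only [Fintype.sum_prod_type, Fintype.sum_bool, cex, Bool.false_eq_true, reduceIte,
      tdist_tripodPt_sq]
    ring
  · fin_cases i <;> norm_num [raySign, Fin.ext_iff]

theorem isUniqueMinimizer_expectation_cex_slice_false :
    IsUniqueMinimizer (fun x => ∑ s : Bool, (1 / 2 : ℝ) * tdist x (cex (s, false)) ^ 2)
      tripodOrigin := by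
  refine isUniqueMinimizer_origin_of_nonpos (m := fun i => (raySign i 0 + raySign i 1) / 2)
    (c := 1) (fun x => ?_) (fun i => ?_)
  · simp only [Fintype.sum_bool, cex, Bool.false_eq_true, reduceIte, tdist_tripodPt_sq]
    ring
  · fin_cases i <;> norm_num [raySign, Fin.ext_iff]

theorem isUniqueMinimizer_expectation_cex_slice_true :
    IsUniqueMinimizer (fun x => ∑ s : Bool, (1 / 2 : ℝ) * tdist x (cex (s, true)) ^ 2)
      (tripodPt 2) := by
  refine isUniqueMinimizer_of_pos (m := fun i => raySign i 2) (c := 1) (fun x => ?_)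
    (by norm_num [tripodPt]) (by simp [raySign, tripodPt]) (fun i hi => ?_)
  · simp [cex, tdist_tripodPt_sq]
  · simp [raySign, show i ≠ 2 from hi]

theorem isUniqueMinimizer_iterated_expectation_cex :
    IsUniqueMinimizer
      (fun x => (1 / 2 : ℝ) * tdist x tripodOrigin ^ 2 + (1 / 2) * tdist x (tripodPt 2) ^ 2)
      tripodHalf := by
  refine isUniqueMinimizer_of_pos (m := fun i => raySign i 2 / 2) (c := 1 / 2) (fun x => ?_)
    (by norm_num [tripodHalf]) (by simp [raySign, tripodHalf]) (fun i hi => ?_)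
  · rw [tdist_origin, tdist_tripodPt_sq]
    ring
  · norm_num [raySign, show i ≠ 2 from hi]

/-- Failure of the Fubini identity on the tripod: for `f = cex` on `{a,b}²` with the uniform
measure, `E(f)` is the gluing point, `E(f^a)` is the gluing point, `E(f^b) = (3,1)`, the
repeated expectation `E_y(E(f^y))` is `(3,1/2)`, and `d(E(f), E_y(E(f^y))) = 1/2 > 0`.
Each expectation is characterized as the unique minimizer of the weighted sum of squared
distances to the corresponding values. -/
theorem tripod_fubini_fails :
    (∀ x : Tripod,
        (∀ y : Tripod,
            ∑ w : Bool × Bool, (1 / 4 : ℝ) * tdist x (cex w) ^ 2 ≤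
              ∑ w : Bool × Bool, (1 / 4 : ℝ) * tdist y (cex w) ^ 2) ↔
          x = tripodOrigin) ∧
    (∀ x : Tripod,
        (∀ y : Tripod,
            ∑ s : Bool, (1 / 2 : ℝ) * tdist x (cex (s, false)) ^ 2 ≤
              ∑ s : Bool, (1 / 2 : ℝ) * tdist y (cex (s, false)) ^ 2) ↔
          x = tripodOrigin) ∧
    (∀ x : Tripod,
        (∀ y : Tripod,
            ∑ s : Bool, (1 / 2 : ℝ) * tdist x (cex (s, true)) ^ 2 ≤
              ∑ s : Bool, (1 / 2 : ℝ) * tdist y (cex (s, true)) ^ 2) ↔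
          x = tripodPt 2) ∧
    (∀ x : Tripod,
        (∀ y : Tripod,
            (1 / 2 : ℝ) * tdist x tripodOrigin ^ 2 + (1 / 2) * tdist x (tripodPt 2) ^ 2 ≤
              (1 / 2 : ℝ) * tdist y tripodOrigin ^ 2 + (1 / 2) * tdist y (tripodPt 2) ^ 2) ↔
          x = tripodHalf) ∧
    tdist tripodOrigin tripodHalf = 1 / 2 ∧ (0 : ℝ) < 1 / 2 :=
  ⟨isUniqueMinimizer_expectation_cex, isUniqueMinimizer_expectation_cex_slice_false,
    isUniqueMinimizer_expectation_cex_slice_true, isUniqueMinimizer_iterated_expectation_cex,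
    by rw [tdist_comm, tdist_origin]; rfl, by norm_num⟩
end
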